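/- arXiv:2112.03538 — 2 statements merged into one kernel-verified Lean document; each statement's English description precedes it below -/
import Mathlib

section
/- If y ⪯ x and y ≠ x, then y ⪯ x − sgn(x_{n(x)})·e_{n(x)}, where e_{n(x)} is the standard basis vector in the direction of the last nonzero coordinate of x. In other words, the immediate predecessor of x in the descending order covers all strict predecessors of x. -/
/-- `descStep x y` means `y ⪯ x`. -/
def descStep {d : ℕ} (x y : Fin d → ℤ) : Prop :=
  (∀ i, 0 ≤ x i * y i) ∧ (∀ i, |y i| ≤ |x i|) ∧
  ∀ i : Fin d, (∃ j, i < j ∧ y j ≠ 0) → y i = x i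

/-- If `y ⪯ x` and `y ≠ x`, then `y ⪯ x − sgn(x_{n(x)}) e_{n(x)}`, where `n(x)`
(here called `j`) is the index of the last nonzero coordinate of `x`. -/
theorem descStep_pred {d : ℕ} (x y : Fin d → ℤ) (j : Fin d)
    (hj : x j ≠ 0) (hlast : ∀ k, j < k → x k = 0)
    (h : descStep x y) (hne : y ≠ x) :
    descStep (Function.update x j (x j - Int.sign (x j))) y := by
  obtain ⟨h1, h2, h3⟩ := h
  -- y vanishes beyond j
  have hy0 : ∀ k, j < k → y k = 0 := by
    intro k hk
    have := h2 k
    rw [hlast k hk] at this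
    simpa using this
  -- y j ≠ x j
  have hyj : y j ≠ x j := by
    intro heq
    apply hne
    funext i
    rcases lt_trichotomy i j with hi | hi | hi
    · exact h3 i ⟨j, hi, heq ▸ hj⟩
    · rw [hi, heq]
    · rw [hy0 i hi, hlast i hi]
  have habs : |y j| < |x j| := by
    rcases lt_or_eq_of_le (h2 j) with h' | h'
    · exact h'
    · exfalso
      have hs := h1 j
      rcases abs_eq_abs.mp h' with he | he
      · exact hyj he
      · rw [he] at hs
        nlinarith [sq_pos_of_ne_zero hj, sq_abs (x j)]
  have habs' : |y j| ≤ |x j - Int.sign (x j)| := by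
    have : |x j - Int.sign (x j)| = |x j| - 1 := by
      rcases lt_or_gt_of_ne hj with h' | h'
      · rw [Int.sign_eq_neg_one_of_neg h', abs_of_neg h', abs_of_nonpos (by omega)]; ring
      · rw [Int.sign_eq_one_of_pos h', abs_of_pos h', abs_of_nonneg (by omega)]
    omega
  refine ⟨?_, ?_, ?_⟩
  · intro i
    by_cases hij : i = j
    · subst hij
      rw [Function.update_self]
      have hs := h1 i
      rcases lt_or_gt_of_ne hj with h' | h'
      · have : y i ≤ 0 := by nlinarith
        have : x i - Int.sign (x i) ≤ 0 := by
          rw [Int.sign_eq_neg_one_of_neg h']; omega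
        nlinarith
      · have : 0 ≤ y i := by nlinarith
        have : 0 ≤ x i - Int.sign (x i) := by
          rw [Int.sign_eq_one_of_pos h']; omega
        nlinarith
    · rw [Function.update_of_ne hij]; exact h1 i
  · intro i
    by_cases hij : i = j
    · subst hij; rw [Function.update_self]; exact habs'
    · rw [Function.update_of_ne hij]; exact h2 i
  · rintro i ⟨k, hik, hyk⟩
    have hkj : k ≤ j := by
      by_contra hc
      exact hyk (hy0 k (lt_of_not_ge hc))
    have hij : i ≠ j := fun he => absurd (he ▸ lt_of_lt_of_le hik hkj) (lt_irrefl _)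
    rw [Function.update_of_ne hij]
    exact h3 i ⟨k, hik, hyk⟩
end

section
/- For d ≥ 2, n ≥ 1 and α ∈ [0, 1/2], the number of length-n walks in ℤ^d from the origin with no immediate backtracking that contain at least αn descending steps is at most 2^{n+1}·(2d−2)^{n(1−α)}. -/
namespace CardWalksAux

instance descStepDec {d : ℕ} (x y : Fin d → ℤ) : Decidable (descStep x y) := by
  unfold descStep; infer_instance

variable {d : ℕ}

/-- the 2d neighbors of a vertex -/
def nbhd (v : Fin d → ℤ) : Finset (Fin d → ℤ) :=
  Finset.univ.image
    (fun p : Fin d × Bool => Function.update v p.1 (v p.1 + if p.2 then 1 else -1))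

lemma mem_nbhd {v w : Fin d → ℤ} :
    w ∈ nbhd v ↔ ∃ j : Fin d, ∃ e : ℤ, (e = 1 ∨ e = -1) ∧
      w = Function.update v j (v j + e) := by
  simp only [nbhd, Finset.mem_image, Finset.mem_univ, true_and, Prod.exists]
  constructor
  · rintro ⟨j, b, h⟩
    cases b
    · exact ⟨j, -1, Or.inr rfl, h.symm⟩
    · exact ⟨j, 1, Or.inl rfl, h.symm⟩
  · rintro ⟨j, e, he, h⟩
    rcases he with rfl | rfl
    · exact ⟨j, true, h.symm⟩
    · exact ⟨j, false, h.symm⟩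

lemma card_nbhd (v : Fin d → ℤ) : (nbhd v).card = 2 * d := by
  rw [nbhd, Finset.card_image_of_injective _ ?_, Finset.card_univ, Fintype.card_prod,
    Fintype.card_fin, Fintype.card_bool, Nat.mul_comm]
  rintro ⟨j, b⟩ ⟨j', b'⟩ h
  simp only at h
  have hjj : j = j' := by
    by_contra hne
    have h2 := congrFun h j
    rw [Function.update_self, Function.update_of_ne (fun hc => hne hc)] at h2
    cases b <;> simp at h2 <;> omega
  subst hjj
  have h2 := congrFun h j
  rw [Function.update_self, Function.update_self] at h2
  cases b <;> cases b' <;> simp_all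

lemma self_not_mem_nbhd (v : Fin d → ℤ) : v ∉ nbhd v := by
  rw [mem_nbhd]
  rintro ⟨j, e, he, h⟩
  have := congrFun h j
  rw [Function.update_self] at this
  rcases he with rfl | rfl <;> omega

lemma nbhd_symm {v w : Fin d → ℤ} (h : w ∈ nbhd v) : v ∈ nbhd w := by
  rw [mem_nbhd] at h ⊢
  obtain ⟨j, e, he, rfl⟩ := h
  refine ⟨j, -e, by rcases he with rfl | rfl <;> simp, ?_⟩
  funext i
  by_cases hij : i = j
  · subst hij
    rw [Function.update_self, Function.update_self]
    ring
  · simp [Function.update_of_ne hij]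

lemma sum_abs_eq_one_iff {v w : Fin d → ℤ} :
    (∑ j, |w j - v j|) = 1 ↔ w ∈ nbhd v := by
  constructor
  · intro h
    have hnonneg : ∀ i : Fin d, 0 ≤ |w i - v i| := fun i => abs_nonneg _
    have hex : ∃ j : Fin d, w j - v j ≠ 0 := by
      by_contra hc
      push_neg at hc
      have : (∑ j, |w j - v j|) = 0 :=
        Finset.sum_eq_zero fun i _ => by rw [hc i, abs_zero]
      omega
    obtain ⟨j, hj⟩ := hex
    have hsplit : |w j - v j| + ∑ i ∈ Finset.univ.erase j, |w i - v i| = 1 := by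
      rw [Finset.add_sum_erase Finset.univ (fun i => |w i - v i|) (Finset.mem_univ j)]
      exact h
    have hrest : ∑ i ∈ Finset.univ.erase j, |w i - v i| = 0 := by
      have h1 : 0 ≤ ∑ i ∈ Finset.univ.erase j, |w i - v i| :=
        Finset.sum_nonneg fun i _ => abs_nonneg _
      have h2 : 1 ≤ |w j - v j| := by
        rcases (abs_nonneg (w j - v j)).lt_or_eq with h' | h'
        · omega
        · exact absurd h'.symm (abs_ne_zero.mpr hj).elim
      omega
    have habs : |w j - v j| = 1 := by omega
    have hzero : ∀ i : Fin d, i ≠ j → w i = v i := by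
      intro i hij
      have := (Finset.sum_eq_zero_iff_of_nonneg (fun i _ => abs_nonneg (w i - v i))).mp
        hrest i (Finset.mem_erase.mpr ⟨hij, Finset.mem_univ i⟩)
      have := abs_eq_zero.mp this
      omega
    rw [mem_nbhd]
    refine ⟨j, w j - v j, ?_, ?_⟩
    · rcases abs_eq (by norm_num : (0:ℤ) ≤ 1) |>.mp habs with h' | h'
      · exact Or.inl h'
      · exact Or.inr h'
    · funext i
      by_cases hij : i = j
      · subst hij; rw [Function.update_self]; ring
      · rw [Function.update_of_ne hij]; exact hzero i hij
  · intro h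
    rw [mem_nbhd] at h
    obtain ⟨j, e, he, rfl⟩ := h
    rw [Finset.sum_eq_single j]
    · rw [Function.update_self]
      rcases he with rfl | rfl <;> simp
    · intro i _ hij
      rw [Function.update_of_ne hij]
      simp
    · intro hj
      exact absurd (Finset.mem_univ j) hj


lemma descStep_zero {w : Fin d → ℤ} (h : descStep (0 : Fin d → ℤ) w) : w = 0 := by
  funext i
  have h1 := h.2.1 i
  simp only [Pi.zero_apply, abs_zero] at h1
  have h2 : |w i| = 0 := le_antisymm h1 (abs_nonneg _)
  simpa using abs_eq_zero.mp h2

/-- key facts about a descending step to a neighbor -/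
lemma descStep_nbhd_spec {v w : Fin d → ℤ} {j : Fin d} {e : ℤ}
    (he : e = 1 ∨ e = -1) (hw : w = Function.update v j (v j + e))
    (h : descStep v w) :
    v j ≠ 0 ∧ ((0 < v j → e = -1) ∧ (v j < 0 → e = 1)) ∧ (∀ i, j < i → v i = 0) := by
  have habs : |v j + e| ≤ |v j| := by
    have := h.2.1 j
    rw [hw, Function.update_self] at this
    exact this
  have habs' : ((v j + e).natAbs : ℤ) ≤ ((v j).natAbs : ℤ) := by
    rwa [Int.abs_eq_natAbs, Int.abs_eq_natAbs] at habs
  have hA : v j ≠ 0 ∧ ((0 < v j → e = -1) ∧ (v j < 0 → e = 1)) := by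
    refine ⟨?_, ?_, ?_⟩ <;> rcases he with rfl | rfl <;> omega
  refine ⟨hA.1, hA.2, ?_⟩
  intro i hi
  by_contra hvi
  have hwi : w i ≠ 0 := by
    rw [hw, Function.update_of_ne (by exact fun hc => absurd hc (by rintro rfl; exact lt_irrefl _ hi))]
    exact hvi
  have := h.2.2 j ⟨i, hi, hwi⟩
  rw [hw, Function.update_self] at this
  rcases he with rfl | rfl <;> omega

lemma descStep_unique {v w w' : Fin d → ℤ} (hw : w ∈ nbhd v) (hw' : w' ∈ nbhd v)
    (h : descStep v w) (h' : descStep v w') : w = w' := by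
  rw [mem_nbhd] at hw hw'
  obtain ⟨j, e, he, hwe⟩ := hw
  obtain ⟨j', e', he', hwe'⟩ := hw'
  obtain ⟨h1, h2, h3⟩ := descStep_nbhd_spec he hwe h
  obtain ⟨h1', h2', h3'⟩ := descStep_nbhd_spec he' hwe' h'
  have hjj : j = j' := by
    rcases lt_trichotomy j j' with hlt | heq | hgt
    · exact absurd (h3 j' hlt) h1'
    · exact heq
    · exact absurd (h3' j hgt) h1
  subst hjj
  have hee : e = e' := by
    rcases lt_trichotomy (v j) 0 with hvj | hvj | hvj
    · rw [h2.2 hvj, h2'.2 hvj]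
    · exact absurd hvj h1
    · rw [h2.1 hvj, h2'.1 hvj]
  rw [hwe, hwe', hee]


/-- non-backtracking walks of length `m` continuing from `v`, previous vertex `u`,
recorded as the list of vertices after `v` -/
def walksF (d : ℕ) : (Fin d → ℤ) → (Fin d → ℤ) → ℕ → Finset (List (Fin d → ℤ))
  | _, _, 0 => {[]}
  | v, u, (m+1) =>
      ((nbhd v).erase u).biUnion fun w => (walksF d w v m).image (w :: ·)

/-- number of descending steps along a walk starting at `v` -/
def descCount : (Fin d → ℤ) → List (Fin d → ℤ) → ℕ
  | _, [] => 0
  | v, (w :: l) => (if descStep v w then 1 else 0) + descCount w l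

/-- recursive bound function: morally `∑_{j ≥ k} C(m,j) c^(m-j)` -/
def g (c : ℕ) : ℕ → ℕ → ℕ
  | 0, 0 => 1
  | 0, (_+1) => 0
  | (m+1), k => g c m (k-1) + c * g c m k

lemma g_anti (c : ℕ) : ∀ m {k k' : ℕ}, k ≤ k' → g c m k' ≤ g c m k := by
  intro m
  induction m with
  | zero =>
    intro k k' hk
    match k, k' with
    | 0, 0 => exact le_refl _
    | 0, (k'+1) => exact Nat.zero_le _
    | (k+1), (k'+1) => exact le_refl _
  | succ m ih =>
    intro k k' hk
    simp only [g]
    exact Nat.add_le_add (ih (by omega)) (Nat.mul_le_mul_left _ (ih hk))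

lemma g_le (c : ℕ) (hc : 1 ≤ c) : ∀ m k : ℕ, g c m k ≤ 2 ^ m * c ^ (m - k) := by
  intro m
  induction m with
  | zero =>
    intro k
    match k with
    | 0 => simp [g]
    | (k+1) => simp [g]
  | succ m ih =>
    intro k
    simp only [g]
    have h1 : g c m (k-1) ≤ 2 ^ m * c ^ (m + 1 - k) := by
      refine (ih (k-1)).trans ?_
      have : c ^ (m - (k-1)) ≤ c ^ (m + 1 - k) := Nat.pow_le_pow_right hc (by omega)
      exact Nat.mul_le_mul_left _ this
    have h2 : c * g c m k ≤ 2 ^ m * c ^ (m + 1 - k) := by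
      rcases Nat.lt_or_ge m k with hmk | hmk
      · -- k ≥ m + 1 : g c m k = 0
        have hz : g c m k = 0 := by
          clear ih h1
          induction m generalizing k with
          | zero => match k, hmk with | (k+1), _ => rfl
          | succ m ih2 =>
            simp only [g]
            rw [ih2 (k-1) (by omega), ih2 k (by omega)]
            simp
        rw [hz]; simp
      · calc c * g c m k ≤ c * (2 ^ m * c ^ (m - k)) := Nat.mul_le_mul_left _ (ih k)
          _ = 2 ^ m * c ^ (m - k + 1) := by ring
          _ = 2 ^ m * c ^ (m + 1 - k) := by rw [Nat.sub_add_comm hmk]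
    calc g c m (k-1) + c * g c m k ≤ 2 ^ m * c ^ (m+1-k) + 2 ^ m * c ^ (m+1-k) :=
          Nat.add_le_add h1 h2
      _ = 2 ^ (m+1) * c ^ (m+1-k) := by ring

lemma g_succ_ge (c m k : ℕ) : (1 + c) * g c m k ≤ g c (m+1) k := by
  simp only [g]
  have := g_anti c m (Nat.sub_le k 1)
  nlinarith [Nat.zero_le (g c m k)]


lemma card_filter_walksF_succ (v u : Fin d → ℤ) (m k : ℕ) :
    ((walksF d v u (m+1)).filter (fun l => k ≤ descCount v l)).card
      = ∑ w ∈ (nbhd v).erase u,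
          ((walksF d w v m).filter
            (fun l => k - (if descStep v w then 1 else 0) ≤ descCount w l)).card := by
  have hdisj : ∀ w ∈ (nbhd v).erase u, ∀ w' ∈ (nbhd v).erase u, w ≠ w' →
      Disjoint (((walksF d w v m).image (w :: ·)).filter (fun l => k ≤ descCount v l))
        (((walksF d w' v m).image (w' :: ·)).filter (fun l => k ≤ descCount v l)) := by
    intro w _ w' _ hne
    rw [Finset.disjoint_left]
    rintro l hl hl'
    obtain ⟨a, _, rfl⟩ := Finset.mem_image.mp (Finset.mem_filter.mp hl).1
    obtain ⟨b, _, hb⟩ := Finset.mem_image.mp (Finset.mem_filter.mp hl').1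
    exact hne (List.head_eq_of_cons_eq hb.symm)
  show ((((nbhd v).erase u).biUnion fun w => (walksF d w v m).image (w :: ·)).filter
      (fun l => k ≤ descCount v l)).card = _
  rw [Finset.filter_biUnion, Finset.card_biUnion hdisj]
  refine Finset.sum_congr rfl fun w _ => ?_
  rw [Finset.filter_image, Finset.card_image_of_injective _ (List.cons_injective)]
  congr 1
  refine Finset.filter_congr fun l _ => ?_
  show (k ≤ descCount v (w :: l)) ↔ _
  simp only [descCount]
  by_cases h : descStep v w <;> simp [h] <;> omega

lemma walksF_card_bound (hd : 2 ≤ d) :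
    ∀ (m k : ℕ) (v u : Fin d → ℤ), u ∈ nbhd v →
    ((walksF d v u m).filter (fun l => k ≤ descCount v l)).card ≤ g (2*d-2) m k := by
  intro m
  induction m with
  | zero =>
    intro k v u _
    match k with
    | 0 => simp [walksF, g, descCount]
    | k+1 => simp [walksF, g, descCount, Finset.filter_singleton]
  | succ m ih =>
    intro k v u hu
    rw [card_filter_walksF_succ]
    set c := 2*d - 2 with hc
    set S := (nbhd v).erase u with hS
    have hsum : ∑ w ∈ S, ((walksF d w v m).filter
          (fun l => k - (if descStep v w then 1 else 0) ≤ descCount w l)).card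
        ≤ ∑ w ∈ S, g c m (k - (if descStep v w then 1 else 0)) :=
      Finset.sum_le_sum fun w hw =>
        ih _ w v (nbhd_symm (Finset.mem_of_mem_erase hw))
    refine hsum.trans ?_
    rw [← Finset.sum_filter_add_sum_filter_not S (fun w => descStep v w)]
    have e1 : ∑ w ∈ S.filter (fun w => descStep v w),
        g c m (k - (if descStep v w then 1 else 0))
        = (S.filter (fun w => descStep v w)).card * g c m (k-1) := by
      rw [Finset.sum_congr rfl (fun w hw => by
        rw [if_pos (Finset.mem_filter.mp hw).2]), Finset.sum_const, smul_eq_mul]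
    have e2 : ∑ w ∈ S.filter (fun w => ¬ descStep v w),
        g c m (k - (if descStep v w then 1 else 0))
        = (S.filter (fun w => ¬ descStep v w)).card * g c m k := by
      rw [Finset.sum_congr rfl (fun w hw => by
        rw [if_neg (Finset.mem_filter.mp hw).2, Nat.sub_zero]),
        Finset.sum_const, smul_eq_mul]
    rw [e1, e2]
    set a := (S.filter (fun w => descStep v w)).card with ha'
    set b := (S.filter (fun w => ¬ descStep v w)).card with hb'
    have hdesc : a ≤ 1 := by
      rw [ha', Finset.card_le_one]
      intro w hw w' hw'
      exact descStep_unique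
        (Finset.mem_of_mem_erase (Finset.mem_filter.mp hw).1)
        (Finset.mem_of_mem_erase (Finset.mem_filter.mp hw').1)
        (Finset.mem_filter.mp hw).2 (Finset.mem_filter.mp hw').2
    have hab : a + b = S.card := by
      rw [ha', hb']
      exact Finset.card_filter_add_card_filter_not _
    have hScard : S.card = 2*d - 1 := by
      rw [hS, Finset.card_erase_of_mem hu, card_nbhd]
    have hc1 : c + 1 = 2*d - 1 := by omega
    have hmono : g c m k ≤ g c m (k-1) := g_anti c m (Nat.sub_le k 1)
    have hgoal : a * g c m (k-1) + b * g c m k ≤ g c m (k-1) + c * g c m k := by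
      have hab' : a + b ≤ c + 1 := by omega
      have ha01 : a = 0 ∨ a = 1 := by omega
      rcases ha01 with h0 | h0 <;> rw [h0]
      · calc 0 * g c m (k-1) + b * g c m k = b * g c m k := by ring
          _ ≤ (c+1) * g c m k := Nat.mul_le_mul_right _ (by omega)
          _ = g c m k + c * g c m k := by ring
          _ ≤ g c m (k-1) + c * g c m k := Nat.add_le_add_right hmono _
      · calc 1 * g c m (k-1) + b * g c m k
            ≤ 1 * g c m (k-1) + c * g c m k :=
              Nat.add_le_add_left (Nat.mul_le_mul_right _ (by omega)) _
          _ = g c m (k-1) + c * g c m k := by ring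
    exact hgoal.trans (le_of_eq rfl)


lemma descCount_ofFn : ∀ (n : ℕ) (ν : Fin (n+1) → (Fin d → ℤ)),
    descCount (ν 0) (List.ofFn fun i : Fin n => ν i.succ)
      = (Finset.univ.filter fun i : Fin n => descStep (ν i.castSucc) (ν i.succ)).card := by
  intro n
  induction n with
  | zero => intro ν; simp [descCount]
  | succ m ih =>
    intro ν
    rw [List.ofFn_succ]
    show (if descStep (ν 0) (ν (Fin.succ 0)) then 1 else 0)
        + descCount (ν (Fin.succ 0)) (List.ofFn fun i : Fin m => ν (Fin.succ i).succ) = _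
    have hih := ih (fun i : Fin (m+1) => ν i.succ)
    rw [hih, Finset.card_filter, Finset.card_filter, Fin.sum_univ_succ]
    have hgoal : ∀ i : Fin m, ((Fin.succ i).castSucc : Fin (m+2)) = (i.castSucc : Fin (m+1)).succ :=
      fun i => (Fin.succ_castSucc _).symm
    refine congrArg₂ (· + ·) ?_ ?_
    · exact if_congr Iff.rfl rfl rfl
    · refine Finset.sum_congr rfl fun i _ => ?_
      rw [hgoal i]

lemma ofFn_mem_walksF : ∀ (n : ℕ) (ν : Fin (n+1) → (Fin d → ℤ)) (u : Fin d → ℤ),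
    (∀ i : Fin n, ν i.succ ∈ nbhd (ν i.castSucc)) →
    (∀ i : ℕ, ∀ _ : i + 2 ≤ n, ν ⟨i + 2, by omega⟩ ≠ ν ⟨i, by omega⟩) →
    (∀ _ : 1 ≤ n, ν ⟨1, by omega⟩ ≠ u) →
    (List.ofFn fun i : Fin n => ν i.succ) ∈ walksF d (ν 0) u n := by
  intro n
  induction n with
  | zero => intro ν u _ _ _; simp [walksF]
  | succ m ih =>
    intro ν u hstep hnb hfirst
    rw [List.ofFn_succ]
    show _ ∈ ((nbhd (ν 0)).erase u).biUnion fun w => (walksF d w (ν 0) m).image (w :: ·)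
    rw [Finset.mem_biUnion]
    refine ⟨ν (Fin.succ 0), Finset.mem_erase.mpr ⟨?_, ?_⟩, ?_⟩
    · exact hfirst (by omega)
    · have := hstep 0
      simpa using this
    · rw [Finset.mem_image]
      refine ⟨List.ofFn fun i : Fin m => (fun j : Fin (m+1) => ν j.succ) i.succ, ?_, rfl⟩
      have h0 : (fun j : Fin (m+1) => ν j.succ) 0 = ν (Fin.succ 0) := rfl
      rw [← h0]
      refine ih (fun j : Fin (m+1) => ν j.succ) (ν 0) ?_ ?_ ?_
      · intro i
        have := hstep i.succ
        rwa [← Fin.succ_castSucc] at this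
      · intro i hi
        have := hnb (i+1) (by omega)
        have e1 : (⟨i + 2, by omega⟩ : Fin (m+1)).succ = ⟨i + 1 + 2, by omega⟩ := by
          apply Fin.ext; simp
        have e2 : (⟨i, by omega⟩ : Fin (m+1)).succ = ⟨i + 1, by omega⟩ := by
          apply Fin.ext; simp
        simp only [e1, e2]
        exact this
      · intro hm
        have := hnb 0 (by omega)
        have e1 : (⟨1, by omega⟩ : Fin (m+1)).succ = ⟨2, by omega⟩ := by
          apply Fin.ext; simp
        have e2 : (⟨0, by omega⟩ : Fin (m+2)) = 0 := rfl
        simp only [e1]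
        rw [e2] at this
        exact this


lemma ncard_setOf_fin (n : ℕ) (P : Fin n → Prop) [DecidablePred P] :
    ({i : Fin n | P i}).ncard = (Finset.univ.filter P).card := by
  rw [← Set.ncard_coe_finset]
  congr 1
  ext i
  simp

lemma top_card_bound (hd : 2 ≤ d) (n k : ℕ) (hn : 1 ≤ n) :
    ((walksF d (0 : Fin d → ℤ) 0 n).filter (fun l => k ≤ descCount 0 l)).card
      ≤ 2 ^ (n+1) * (2*d-2) ^ (n - k) := by
  obtain ⟨m, rfl⟩ : ∃ m, n = m + 1 := ⟨n - 1, by omega⟩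
  rw [card_filter_walksF_succ]
  rw [Finset.erase_eq_of_notMem (self_not_mem_nbhd 0)]
  set c := 2*d - 2 with hc
  have hstep : ∀ w ∈ nbhd (0 : Fin d → ℤ),
      ((walksF d w 0 m).filter
        (fun l => k - (if descStep 0 w then 1 else 0) ≤ descCount w l)).card
      ≤ g c m k := by
    intro w hw
    have hds : ¬ descStep (0 : Fin d → ℤ) w := by
      intro h
      rw [descStep_zero h] at hw
      exact self_not_mem_nbhd 0 hw
    rw [if_neg hds, Nat.sub_zero]
    exact walksF_card_bound hd m k w 0 (nbhd_symm hw)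
  calc ∑ w ∈ nbhd (0 : Fin d → ℤ), ((walksF d w 0 m).filter
        (fun l => k - (if descStep 0 w then 1 else 0) ≤ descCount w l)).card
      ≤ ∑ _w ∈ nbhd (0 : Fin d → ℤ), g c m k := Finset.sum_le_sum hstep
    _ = 2 * d * g c m k := by rw [Finset.sum_const, smul_eq_mul, card_nbhd]
    _ ≤ 2 * ((1 + c) * g c m k) := by
        have : 2 * d ≤ 2 * (1 + c) := by omega
        calc 2 * d * g c m k ≤ 2 * (1 + c) * g c m k := Nat.mul_le_mul_right _ this
          _ = 2 * ((1 + c) * g c m k) := by ring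
    _ ≤ 2 * g c (m+1) k := Nat.mul_le_mul_left _ (g_succ_ge c m k)
    _ ≤ 2 * (2 ^ (m+1) * c ^ (m+1-k)) :=
        Nat.mul_le_mul_left _ (g_le c (by omega) (m+1) k)
    _ = 2 ^ (m+1+1) * c ^ (m+1-k) := by ring

end CardWalksAux

open CardWalksAux in
/-- The number of length-`n` non-backtracking walks from the origin in `ℤ^d`
with at least `αn` descending steps is at most `2^(n+1) (2d−2)^(n(1−α))`. -/
theorem card_walks_many_descending (d n : ℕ) (hd : 2 ≤ d) (hn : 1 ≤ n)
    (α : ℝ) (hα0 : 0 ≤ α) (hα1 : α ≤ 1 / 2) :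
    ({ν : Fin (n + 1) → (Fin d → ℤ) |
        ν 0 = 0 ∧
        (∀ i : Fin n, ∑ j, |ν i.succ j - ν i.castSucc j| = 1) ∧
        (∀ i : ℕ, ∀ h : i + 2 ≤ n, ν ⟨i + 2, by omega⟩ ≠ ν ⟨i, by omega⟩) ∧
        α * n ≤ ({i : Fin n | descStep (ν i.castSucc) (ν i.succ)}.ncard : ℝ)}.ncard : ℝ)
      ≤ 2 ^ (n + 1) * ((2 * d - 2 : ℝ)) ^ ((n : ℝ) * (1 - α)) := by
  classical
  set k : ℕ := ⌈α * n⌉₊ with hk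
  set TF := (walksF d (0 : Fin d → ℤ) 0 n).filter (fun l => k ≤ descCount 0 l) with hTF
  -- step 1 : inject the set into TF
  have h1 : ({ν : Fin (n + 1) → (Fin d → ℤ) |
        ν 0 = 0 ∧
        (∀ i : Fin n, ∑ j, |ν i.succ j - ν i.castSucc j| = 1) ∧
        (∀ i : ℕ, ∀ h : i + 2 ≤ n, ν ⟨i + 2, by omega⟩ ≠ ν ⟨i, by omega⟩) ∧
        α * n ≤ ({i : Fin n | descStep (ν i.castSucc) (ν i.succ)}.ncard : ℝ)}).ncard
      ≤ TF.card := by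
    rw [← Set.ncard_coe_finset TF]
    refine Set.ncard_le_ncard_of_injOn
      (fun ν => List.ofFn fun i : Fin n => ν i.succ) ?_ ?_ (Finset.finite_toSet TF)
    · rintro ν ⟨h0, hstep, hnb, hdesc⟩
      have hstep' : ∀ i : Fin n, ν i.succ ∈ nbhd (ν i.castSucc) :=
        fun i => sum_abs_eq_one_iff.mp (hstep i)
      have hfirst : ∀ _ : 1 ≤ n, ν ⟨1, by omega⟩ ≠ (0 : Fin d → ℤ) := by
        intro h1n hcontra
        have h2 := hstep' ⟨0, by omega⟩
        have e1 : (⟨0, by omega⟩ : Fin n).succ = ⟨1, by omega⟩ := rfl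
        have e2 : (⟨0, by omega⟩ : Fin n).castSucc = 0 := rfl
        rw [e1, e2, h0, hcontra] at h2
        exact self_not_mem_nbhd 0 h2
      have hmem := ofFn_mem_walksF n ν 0 hstep' hnb hfirst
      rw [h0] at hmem
      have hcount : k ≤ descCount (0 : Fin d → ℤ) (List.ofFn fun i : Fin n => ν i.succ) := by
        have := descCount_ofFn n ν
        rw [h0] at this
        rw [this]
        rw [ncard_setOf_fin] at hdesc
        exact Nat.ceil_le.mpr hdesc
      simp only [hTF, Finset.coe_filter, Set.mem_setOf_eq]
      exact ⟨hmem, hcount⟩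
    · rintro ν ⟨h0, _, _, _⟩ ν' ⟨h0', _, _, _⟩ heq
      have := List.ofFn_injective heq
      funext i
      refine Fin.cases ?_ ?_ i
      · rw [h0, h0']
      · intro j
        exact congrFun this j
  -- step 2 : numeric bound
  have h2 : TF.card ≤ 2 ^ (n+1) * (2*d-2) ^ (n - k) := top_card_bound hd n k hn
  have hkn : k ≤ n := by
    rw [hk]
    refine Nat.ceil_le.mpr ?_
    calc α * n ≤ 1 * n := by
          apply mul_le_mul_of_nonneg_right (by linarith) (by positivity)
      _ = (n : ℝ) := by ring
  have hkα : (α * n : ℝ) ≤ k := Nat.le_ceil _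
  have hcast : ((2*d-2 : ℕ) : ℝ) = 2 * (d:ℝ) - 2 := by
    have h : (2:ℕ) ≤ 2*d := by clear * - hd; omega
    rw [Nat.cast_sub h]
    push_cast
    ring
  have hbase : (1 : ℝ) ≤ 2 * (d:ℝ) - 2 := by
    have : (2:ℝ) ≤ (d:ℝ) := by exact_mod_cast hd
    linarith
  have hfin : (TF.card : ℝ) ≤ 2 ^ (n + 1) * ((2 * (d:ℝ) - 2)) ^ ((n : ℝ) * (1 - α)) := by
    calc (TF.card : ℝ)
      ≤ ((2 ^ (n+1) * (2*d-2) ^ (n - k) : ℕ) : ℝ) := by exact_mod_cast h2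
      _ = 2 ^ (n+1) * (2 * (d:ℝ) - 2) ^ ((n - k : ℕ) : ℝ) := by
          rw [Nat.cast_mul, Nat.cast_pow, Nat.cast_pow, hcast, Real.rpow_natCast]
          norm_num
      _ ≤ 2 ^ (n+1) * (2 * (d:ℝ) - 2) ^ ((n : ℝ) * (1 - α)) := by
          refine mul_le_mul_of_nonneg_left ?_ (by positivity)
          refine Real.rpow_le_rpow_of_exponent_le hbase ?_
          rw [Nat.cast_sub hkn]
          have : (n:ℝ) * (1 - α) = (n:ℝ) - α * n := by ring
          rw [this]
          linarith
  exact le_trans (by exact_mod_cast h1) hfin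
end
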